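/- With the hypotheses and definitions of the constrained minimization problem I(s,t) (α > 0, τ₁ ≥ 0, τ₂ > 0, 1 ≤ q < 4, 1 ≤ p < 4), every minimizing sequence (f_n, g_n) for I(s,t) is bounded in Y = H¹_ℂ(ℝ) × H¹(ℝ). -/

import Mathlib

open MeasureTheory

noncomputable section

def H1C (f : ℝ → ℂ) : Prop :=
  Differentiable ℝ f ∧ MemLp f 2 ∧ MemLp (deriv f) 2

def H1R (g : ℝ → ℝ) : Prop :=
  Differentiable ℝ g ∧ MemLp g 2 ∧ MemLp (deriv g) 2

/-- Energy density: `P y` plays the role of `y^(p+2)` for `p` rational with odd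
denominator, so that `P y ≤ |y|^(p+2)` and `P y = y^(p+2)` for `y ≥ 0`. -/
def Edens (β₁ β₂ α q : ℝ) (P : ℝ → ℝ) (f : ℝ → ℂ) (g : ℝ → ℝ) (x : ℝ) : ℝ :=
  ‖deriv f x‖ ^ 2 + (deriv g x) ^ 2 - β₁ * ‖f x‖ ^ (q + 2) - β₂ * P (g x)
    - α * ‖f x‖ ^ 2 * g x

/-- The set of energies of admissible pairs with `‖f‖² = s`, `‖g‖² = t`. -/
def IVals (β₁ β₂ α q : ℝ) (P : ℝ → ℝ) (s t : ℝ) : Set ℝ :=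
  { e | ∃ f : ℝ → ℂ, ∃ g : ℝ → ℝ, H1C f ∧ H1R g ∧
      Integrable (Edens β₁ β₂ α q P f g) ∧
      (∫ x : ℝ, ‖f x‖ ^ 2) = s ∧ (∫ x : ℝ, (g x) ^ 2) = t ∧
      e = ∫ x : ℝ, Edens β₁ β₂ α q P f g x }

/-- The constrained infimum `I(s,t)`. -/
def Ifun (β₁ β₂ α q : ℝ) (P : ℝ → ℝ) (s t : ℝ) : ℝ :=
  sInf (IVals β₁ β₂ α q P s t)

/-!
Along the sequence the masses `∫ ‖f‖² + ∫ g² ≤ A` and the energies `E ≤ M` are bounded. Write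
`X = ∫ ‖f'‖² + ∫ g'²`. Agmon's inequality `‖f‖∞⁴ ≤ 4 ‖f‖₂² ‖f'‖₂²` bounds both components
pointwise by `κ = (4 A X)^(1/4)`, so the nonlinear part of the energy is at most a constant times
`A (1 + κ^r)`, with `r = max q p 1 < 4`. Hence `X ≤ M + C (1 + X^(r/4))`, and `r/4 < 1` forces
`X` to stay bounded.
-/

open Filter Topology Set

theorem norm_le_integral_norm_of_hasDerivAt {E : Type*} [NormedAddCommGroup E] [NormedSpace ℝ E]
    [CompleteSpace E] {u u' : ℝ → E} (hu : ∀ x, HasDerivAt u (u' x) x)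
    (hu_int : Integrable u) (hu'_int : Integrable u') (x : ℝ) : ‖u x‖ ≤ ∫ y, ‖u' y‖ := by
  have hlim : Tendsto u atTop (𝓝 0) := tendsto_zero_of_hasDerivAt_of_integrableOn_Ioi (a := x)
    (fun y _ => hu y) hu'_int.integrableOn hu_int.integrableOn
  have hftc : ∫ y in Ioi x, u' y = -u x := by
    rw [integral_Ioi_of_hasDerivAt_of_tendsto' (fun y _ => hu y) hu'_int.integrableOn hlim,
      zero_sub]
  calc ‖u x‖ = ‖∫ y in Ioi x, u' y‖ := by rw [hftc, norm_neg]
    _ ≤ ∫ y in Ioi x, ‖u' y‖ := norm_integral_le_integral_norm _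
    _ ≤ ∫ y, ‖u' y‖ := setIntegral_le_integral hu'_int.norm (.of_forall fun _ => norm_nonneg _)

theorem sq_integral_norm_mul_norm_le {α E F : Type*} [MeasurableSpace α] {μ : Measure α}
    [NormedAddCommGroup E] [NormedAddCommGroup F] {f : α → E} {g : α → F}
    (hf : MemLp f 2 μ) (hg : MemLp g 2 μ) :
    (∫ x, ‖f x‖ * ‖g x‖ ∂μ) ^ 2 ≤ (∫ x, ‖f x‖ ^ 2 ∂μ) * ∫ x, ‖g x‖ ^ 2 ∂μ := by
  have h := integral_mul_le_Lp_mul_Lq_of_nonneg Real.HolderConjugate.two_two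
    (.of_forall fun x => norm_nonneg (f x)) (.of_forall fun x => norm_nonneg (g x))
    (by simpa using hf.norm) (by simpa using hg.norm)
  have h0 : 0 ≤ ∫ x, ‖f x‖ * ‖g x‖ ∂μ := integral_nonneg fun x => by positivity
  simp only [Real.rpow_two, ← Real.sqrt_eq_rpow] at h
  calc (∫ x, ‖f x‖ * ‖g x‖ ∂μ) ^ 2
      ≤ (√(∫ x, ‖f x‖ ^ 2 ∂μ) * √(∫ x, ‖g x‖ ^ 2 ∂μ)) ^ 2 := pow_le_pow_left₀ h0 h 2
    _ = _ := by
      rw [mul_pow, Real.sq_sqrt (integral_nonneg fun _ => by positivity),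
        Real.sq_sqrt (integral_nonneg fun _ => by positivity)]

theorem norm_pow_four_le_integral_mul_integral_deriv {E : Type*} [NormedAddCommGroup E]
    [InnerProductSpace ℝ E] {f : ℝ → E} (hf : Differentiable ℝ f) (hf₂ : MemLp f 2)
    (hf'₂ : MemLp (deriv f) 2) (x : ℝ) :
    ‖f x‖ ^ 4 ≤ 4 * (∫ y, ‖f y‖ ^ 2) * ∫ y, ‖deriv f y‖ ^ 2 := by
  have hu : ∀ y, HasDerivAt (‖f ·‖ ^ 2) (2 * inner ℝ (f y) (deriv f y)) y :=
    fun y => (hf y).hasDerivAt.norm_sq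
  have hprod : Integrable fun y => ‖f y‖ * ‖deriv f y‖ := hf₂.norm.integrable_mul hf'₂.norm
  have hu'_le : ∀ y, ‖2 * inner ℝ (f y) (deriv f y)‖ ≤ 2 * (‖f y‖ * ‖deriv f y‖) := fun y => by
    rw [norm_mul, Real.norm_two]
    exact mul_le_mul_of_nonneg_left (norm_inner_le_norm _ _) zero_le_two
  have hu'_int : Integrable fun y => 2 * inner ℝ (f y) (deriv f y) :=
    (hprod.const_mul 2).mono' ((hf₂.1.inner hf'₂.1).const_mul 2) (.of_forall hu'_le)
  have hsup := norm_le_integral_norm_of_hasDerivAt hu (hf₂.integrable_norm_pow two_ne_zero)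
    hu'_int x
  have h0 : 0 ≤ ‖f x‖ ^ 2 := by positivity
  rw [Real.norm_of_nonneg h0] at hsup
  calc ‖f x‖ ^ 4 = (‖f x‖ ^ 2) ^ 2 := by ring
    _ ≤ (2 * ∫ y, ‖f y‖ * ‖deriv f y‖) ^ 2 := by
      refine pow_le_pow_left₀ h0 (hsup.trans ?_) 2
      rw [← integral_const_mul]
      exact integral_mono hu'_int.norm (hprod.const_mul 2) hu'_le
    _ = 4 * (∫ y, ‖f y‖ * ‖deriv f y‖) ^ 2 := by ring
    _ ≤ 4 * ((∫ y, ‖f y‖ ^ 2) * ∫ y, ‖deriv f y‖ ^ 2) := by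
      gcongr
      exact sq_integral_norm_mul_norm_le hf₂ hf'₂
    _ = 4 * (∫ y, ‖f y‖ ^ 2) * ∫ y, ‖deriv f y‖ ^ 2 := by ring

theorem rpow_add_two_le_mul_sq {y κ q : ℝ} (hy : 0 ≤ y) (hyκ : y ≤ κ) (hq : 0 ≤ q) :
    y ^ (q + 2) ≤ κ ^ q * y ^ 2 := by
  have h : y ^ (q + 2) = y ^ q * y ^ 2 := by
    exact_mod_cast Real.rpow_add_natCast' (n := 2) hy (by positivity)
  rw [h]
  gcongr

theorem rpow_le_one_add_rpow {y q r : ℝ} (hy : 0 ≤ y) (hq : 0 ≤ q) (hqr : q ≤ r) :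
    y ^ q ≤ 1 + y ^ r := by
  rcases le_total y 1 with hy1 | hy1
  · linarith [Real.rpow_le_one hy hy1 hq, Real.rpow_nonneg hy r]
  · linarith [Real.rpow_le_rpow_of_exponent_le hy1 hqr]

theorem exists_bound_of_le_add_mul_rpow {M C θ : ℝ} (hC : 0 ≤ C) (hθ : θ < 1) :
    ∃ B, ∀ X, X ≤ M + C * X ^ θ → X ≤ B := by
  refine ⟨max ((2 * C) ^ (1 - θ)⁻¹) (2 * M), fun X hX => ?_⟩
  by_contra! hB
  have hT : (2 * C) ^ (1 - θ)⁻¹ < X := (le_max_left _ _).trans_lt hB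
  have hXpos : 0 < X := (Real.rpow_nonneg (by positivity) _).trans_lt hT
  have h2C : 2 * C < X ^ (1 - θ) := by
    calc 2 * C = ((2 * C) ^ (1 - θ)⁻¹) ^ (1 - θ) :=
          (Real.rpow_inv_rpow (by positivity) (by linarith)).symm
      _ < X ^ (1 - θ) := Real.rpow_lt_rpow (by positivity) hT (by linarith)
  have hhalf : 2 * (C * X ^ θ) ≤ X :=
    calc 2 * (C * X ^ θ) = 2 * C * X ^ θ := by ring
      _ ≤ X ^ (1 - θ) * X ^ θ := by gcongr
      _ = X := by rw [← Real.rpow_add hXpos, sub_add_cancel, Real.rpow_one]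
  linarith [le_max_right ((2 * C) ^ (1 - θ)⁻¹) (2 * M)]

section Energy

variable {β₁ β₂ α q p κ : ℝ} {P : ℝ → ℝ} {f : ℝ → ℂ} {g : ℝ → ℝ}

theorem sub_le_Edens (hβ₁ : 0 ≤ β₁) (hβ₂ : 0 ≤ β₂) (hα : 0 ≤ α) (hq : 0 ≤ q) (hp : 0 ≤ p)
    (hP : ∀ y, P y ≤ |y| ^ (p + 2)) {x : ℝ} (hfκ : ‖f x‖ ≤ κ) (hgκ : |g x| ≤ κ) :
    ‖deriv f x‖ ^ 2 + deriv g x ^ 2 - ((β₁ * κ ^ q + α * κ) * ‖f x‖ ^ 2 + β₂ * κ ^ p * g x ^ 2)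
      ≤ Edens β₁ β₂ α q P f g x := by
  have hf := rpow_add_two_le_mul_sq (norm_nonneg _) hfκ hq
  have hg : P (g x) ≤ κ ^ p * g x ^ 2 := by
    simpa using (hP (g x)).trans (rpow_add_two_le_mul_sq (abs_nonneg _) hgκ hp)
  have hfg : ‖f x‖ ^ 2 * g x ≤ ‖f x‖ ^ 2 * κ :=
    mul_le_mul_of_nonneg_left ((le_abs_self _).trans hgκ) (by positivity)
  unfold Edens
  nlinarith [mul_le_mul_of_nonneg_left hf hβ₁, mul_le_mul_of_nonneg_left hg hβ₂,
    mul_le_mul_of_nonneg_left hfg hα]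

theorem integral_deriv_sq_le (hβ₁ : 0 ≤ β₁) (hβ₂ : 0 ≤ β₂) (hα : 0 ≤ α) (hq : 0 ≤ q)
    (hp : 0 ≤ p) (hP : ∀ y, P y ≤ |y| ^ (p + 2)) (hf : H1C f) (hg : H1R g)
    (hE : Integrable (Edens β₁ β₂ α q P f g)) (hfκ : ∀ x, ‖f x‖ ≤ κ) (hgκ : ∀ x, |g x| ≤ κ) :
    (∫ x, ‖deriv f x‖ ^ 2) + (∫ x, deriv g x ^ 2) ≤ (∫ x, Edens β₁ β₂ α q P f g x)
      + ((β₁ * κ ^ q + α * κ) * (∫ x, ‖f x‖ ^ 2) + β₂ * κ ^ p * ∫ x, g x ^ 2) := by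
  have If := hf.2.1.integrable_norm_pow two_ne_zero
  have If' := hf.2.2.integrable_norm_pow two_ne_zero
  have Ig := hg.2.1.integrable_sq
  have Ig' := hg.2.2.integrable_sq
  have ID : Integrable fun x => ‖deriv f x‖ ^ 2 + deriv g x ^ 2 := If'.add Ig'
  have IW : Integrable fun x => (β₁ * κ ^ q + α * κ) * ‖f x‖ ^ 2 + β₂ * κ ^ p * g x ^ 2 :=
    (If.const_mul _).add (Ig.const_mul _)
  have hmono : ∫ x, (‖deriv f x‖ ^ 2 + deriv g x ^ 2
      - ((β₁ * κ ^ q + α * κ) * ‖f x‖ ^ 2 + β₂ * κ ^ p * g x ^ 2)) ≤ ∫ x, Edens β₁ β₂ α q P f g x :=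
    integral_mono (ID.sub IW) hE
    fun x => sub_le_Edens hβ₁ hβ₂ hα hq hp hP (hfκ x) (hgκ x)
  rw [integral_sub ID IW, integral_add If' Ig', integral_add (If.const_mul _) (Ig.const_mul _),
    integral_const_mul, integral_const_mul] at hmono
  linarith

theorem dirichlet_le_energy_add_rpow (hβ₁ : 0 ≤ β₁) (hβ₂ : 0 ≤ β₂) (hα : 0 ≤ α) (hq : 0 ≤ q)
    (hp : 0 ≤ p) (hP : ∀ y, P y ≤ |y| ^ (p + 2)) {r : ℝ} (hqr : q ≤ r) (hpr : p ≤ r)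
    (h1r : 1 ≤ r) (hf : H1C f) (hg : H1R g) (hE : Integrable (Edens β₁ β₂ α q P f g)) {A : ℝ}
    (hA : (∫ x, ‖f x‖ ^ 2) + (∫ x, g x ^ 2) ≤ A) :
    (∫ x, ‖deriv f x‖ ^ 2) + (∫ x, deriv g x ^ 2) ≤ (∫ x, Edens β₁ β₂ α q P f g x)
      + (β₁ + α + β₂) * A
        * (1 + (4 * A * ((∫ x, ‖deriv f x‖ ^ 2) + ∫ x, deriv g x ^ 2)) ^ (r / 4)) := by
  set a := ∫ x, ‖f x‖ ^ 2
  set b := ∫ x, g x ^ 2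
  set c := ∫ x, ‖deriv f x‖ ^ 2
  set d := ∫ x, deriv g x ^ 2
  have ha : 0 ≤ a := integral_nonneg fun _ => by positivity
  have hb : 0 ≤ b := integral_nonneg fun _ => by positivity
  have hc : 0 ≤ c := integral_nonneg fun _ => by positivity
  have hd : 0 ≤ d := integral_nonneg fun _ => by positivity
  have hA0 : 0 ≤ 4 * A := by linarith
  set κ := (4 * A * (c + d)) ^ (4⁻¹ : ℝ)
  have le_κ : ∀ {y : ℝ}, 0 ≤ y → y ^ 4 ≤ 4 * A * (c + d) → y ≤ κ := fun hy h => by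
    rw [← Real.pow_rpow_inv_natCast hy four_ne_zero, Nat.cast_ofNat]
    exact Real.rpow_le_rpow (by positivity) h (by norm_num)
  have hfκ : ∀ x, ‖f x‖ ≤ κ := fun x => le_κ (norm_nonneg _) <|
    (norm_pow_four_le_integral_mul_integral_deriv hf.1 hf.2.1 hf.2.2 x).trans
      (mul_le_mul (mul_le_mul_of_nonneg_left (by linarith) zero_le_four) (by linarith) hc hA0)
  have hgκ : ∀ x, |g x| ≤ κ := fun x => by
    have h := norm_pow_four_le_integral_mul_integral_deriv hg.1 hg.2.1 hg.2.2 x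
    simp only [Real.norm_eq_abs, sq_abs] at h
    exact le_κ (abs_nonneg _) <| h.trans
      (mul_le_mul (mul_le_mul_of_nonneg_left (by linarith) zero_le_four) (by linarith) hd hA0)
  have hκ : 0 ≤ κ := by positivity
  have hκr : κ ^ r = (4 * A * (c + d)) ^ (r / 4) := by
    rw [← Real.rpow_mul (by positivity), inv_mul_eq_div]
  have h₁ : κ ^ q ≤ 1 + κ ^ r := rpow_le_one_add_rpow hκ hq hqr
  have h₂ : κ ≤ 1 + κ ^ r := by simpa using rpow_le_one_add_rpow hκ zero_le_one h1r
  have h₃ : κ ^ p ≤ 1 + κ ^ r := rpow_le_one_add_rpow hκ hp hpr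
  have hf_coeff : β₁ * κ ^ q + α * κ ≤ (β₁ + α + β₂) * (1 + κ ^ r) := by
    nlinarith [mul_le_mul_of_nonneg_left h₁ hβ₁, mul_le_mul_of_nonneg_left h₂ hα]
  have hg_coeff : β₂ * κ ^ p ≤ (β₁ + α + β₂) * (1 + κ ^ r) := by
    nlinarith [mul_le_mul_of_nonneg_left h₃ hβ₂]
  have hnonlin : (β₁ * κ ^ q + α * κ) * a + β₂ * κ ^ p * b ≤ (β₁ + α + β₂) * A * (1 + κ ^ r) :=
    calc (β₁ * κ ^ q + α * κ) * a + β₂ * κ ^ p * b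
        ≤ (β₁ + α + β₂) * (1 + κ ^ r) * a + (β₁ + α + β₂) * (1 + κ ^ r) * b := by
          gcongr
      _ = (β₁ + α + β₂) * (1 + κ ^ r) * (a + b) := by ring
      _ ≤ (β₁ + α + β₂) * (1 + κ ^ r) * A := by gcongr
      _ = (β₁ + α + β₂) * A * (1 + κ ^ r) := by ring
  rw [← hκr]
  linarith [integral_deriv_sq_le hβ₁ hβ₂ hα hq hp hP hf hg hE hfκ hgκ]

end Energy

theorem minimizing_seq_bounded_general (α τ₁ τ₂ p q s t : ℝ)
    (hα : 0 < α) (hτ₁ : 0 ≤ τ₁) (hτ₂ : 0 < τ₂)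
    (hq1 : 1 ≤ q) (hq4 : q < 4) (hp1 : 1 ≤ p) (hp4 : p < 4)
    (P : ℝ → ℝ) (hP₁ : ∀ y : ℝ, P y ≤ |y| ^ (p + 2))
    (f : ℕ → ℝ → ℂ) (g : ℕ → ℝ → ℝ)
    (hmem : ∀ n, H1C (f n) ∧ H1R (g n) ∧
      Integrable (Edens (2 * τ₁ / (q + 2)) (2 * τ₂ / ((p + 1) * (p + 2))) α q P (f n) (g n)))
    (hfs : Filter.Tendsto (fun n => ∫ x : ℝ, ‖f n x‖ ^ 2) Filter.atTop (nhds s))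
    (hgt : Filter.Tendsto (fun n => ∫ x : ℝ, (g n x) ^ 2) Filter.atTop (nhds t))
    (hE : Filter.Tendsto
      (fun n => ∫ x : ℝ, Edens (2 * τ₁ / (q + 2)) (2 * τ₂ / ((p + 1) * (p + 2))) α q P (f n) (g n) x)
      Filter.atTop
      (nhds (Ifun (2 * τ₁ / (q + 2)) (2 * τ₂ / ((p + 1) * (p + 2))) α q P s t))) :
    ∃ C : ℝ, ∀ n,
      (∫ x : ℝ, ‖f n x‖ ^ 2) + (∫ x : ℝ, ‖deriv (f n) x‖ ^ 2) +
        (∫ x : ℝ, (g n x) ^ 2) + (∫ x : ℝ, (deriv (g n) x) ^ 2) ≤ C := by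
  set β₁ := 2 * τ₁ / (q + 2)
  set β₂ := 2 * τ₂ / ((p + 1) * (p + 2))
  have hβ₁ : 0 ≤ β₁ := div_nonneg (by linarith) (by linarith)
  have hβ₂ : 0 ≤ β₂ := div_nonneg (by linarith) (by nlinarith)
  set r := max (max q p) 1
  have hr4 : r < 4 := max_lt (max_lt hq4 hp4) (by norm_num)
  obtain ⟨A, hA⟩ := (hfs.add hgt).bddAbove_range
  obtain ⟨M, hM⟩ := hE.bddAbove_range
  have hA0 : 0 ≤ A := (add_nonneg (integral_nonneg fun _ => by positivity)
    (integral_nonneg fun _ => by positivity)).trans (hA ⟨0, rfl⟩)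
  obtain ⟨B, hB⟩ := exists_bound_of_le_add_mul_rpow (M := M + (β₁ + α + β₂) * A)
    (C := (β₁ + α + β₂) * A * (4 * A) ^ (r / 4)) (by positivity) (by linarith : r / 4 < 1)
  refine ⟨A + B, fun n => ?_⟩
  obtain ⟨hfn, hgn, hEn⟩ := hmem n
  have hX := dirichlet_le_energy_add_rpow (r := r) hβ₁ hβ₂ hα.le (by linarith) (by linarith) hP₁
    ((le_max_left q p).trans (le_max_left _ 1)) ((le_max_right q p).trans (le_max_left _ 1))
    (le_max_right _ 1) hfn hgn hEn (hA ⟨n, rfl⟩)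
  rw [Real.mul_rpow (by linarith) (by positivity)] at hX
  have hXB := hB ((∫ x, ‖deriv (f n) x‖ ^ 2) + ∫ x, deriv (g n) x ^ 2)
    (by linarith [hM ⟨n, rfl⟩])
  linarith [hA ⟨n, rfl⟩]

/-- Every minimizing sequence for `I(s,t)` is bounded in `Y = H¹_ℂ × H¹`. -/
theorem minimizing_seq_bounded (α τ₁ τ₂ p q s t : ℝ)
    (hα : 0 < α) (hτ₁ : 0 ≤ τ₁) (hτ₂ : 0 < τ₂)
    (hq1 : 1 ≤ q) (hq4 : q < 4) (hp1 : 1 ≤ p) (hp4 : p < 4)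
    (P : ℝ → ℝ) (hP₁ : ∀ y : ℝ, P y ≤ |y| ^ (p + 2))
    (hP₂ : ∀ y : ℝ, 0 ≤ y → P y = y ^ (p + 2))
    (hs : 0 < s) (ht : 0 < t)
    (f : ℕ → ℝ → ℂ) (g : ℕ → ℝ → ℝ)
    (hmem : ∀ n, H1C (f n) ∧ H1R (g n) ∧
      Integrable (Edens (2 * τ₁ / (q + 2)) (2 * τ₂ / ((p + 1) * (p + 2))) α q P (f n) (g n)))
    (hfs : Filter.Tendsto (fun n => ∫ x : ℝ, ‖f n x‖ ^ 2) Filter.atTop (nhds s))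
    (hgt : Filter.Tendsto (fun n => ∫ x : ℝ, (g n x) ^ 2) Filter.atTop (nhds t))
    (hE : Filter.Tendsto
      (fun n => ∫ x : ℝ, Edens (2 * τ₁ / (q + 2)) (2 * τ₂ / ((p + 1) * (p + 2))) α q P (f n) (g n) x)
      Filter.atTop
      (nhds (Ifun (2 * τ₁ / (q + 2)) (2 * τ₂ / ((p + 1) * (p + 2))) α q P s t))) :
    ∃ C : ℝ, ∀ n,
      (∫ x : ℝ, ‖f n x‖ ^ 2) + (∫ x : ℝ, ‖deriv (f n) x‖ ^ 2) +
        (∫ x : ℝ, (g n x) ^ 2) + (∫ x : ℝ, (deriv (g n) x) ^ 2) ≤ C :=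
  minimizing_seq_bounded_general α τ₁ τ₂ p q s t hα hτ₁ hτ₂ hq1 hq4 hp1 hp4 P hP₁ f g hmem hfs hgt
    hE
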